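/- For all real numbers y₁, y₂ and all t ∈ ℝ, D(t) = ((−2t − 1)/3)·E(t) + ((t² + t + 1)/9)·E′(t), where E′ is the derivative of E. Consequently, for every t ∈ ℝ, one has (E(t) = 0 and D(t) = 0) if and only if (E(t) = 0 and E′(t) = 0). -/

import Mathlib

/-!
Reading `E` as the evaluation of a polynomial gives `E'` in closed form, after which the
identity is a ring identity. Since `t² + t + 1 > 0`, the coefficient of `E'` never vanishes,
so on the zero set of `E` the conditions `D = 0` and `E' = 0` agree.
-/

/-- The polynomial `E(t)` as a real-valued function. -/
def EFun (y₁ y₂ t : ℝ) : ℝ :=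
  y₁^2 * (t^2 + 4*t + 1)^3 + y₂^2 * (t^2 - 2*t - 2)^3
    + 2*t^6 + 6*t^5 - 15*t^4 - 40*t^3 - 15*t^2 + 6*t + 2

/-- The polynomial `D(t)` as a real-valued function. -/
def DFun (y₁ y₂ t : ℝ) : ℝ :=
  y₁^2 * (1 - t^2) * (t^2 + 4*t + 1)^2 + y₂^2 * (2*t + t^2) * (t^2 - 2*t - 2)^2
    + 6*t^5 + 15*t^4 - 15*t^2 - 6*t

theorem and_eq_zero_iff_of_eq_mul_add_mul {R : Type*} [Ring R] [NoZeroDivisors R]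
    {a b e e' d : R} (hb : b ≠ 0) (h : d = a * e + b * e') :
    (e = 0 ∧ d = 0) ↔ (e = 0 ∧ e' = 0) := by
  subst h
  exact and_congr_right fun he => by simp [he, hb]

open Polynomial

noncomputable def EPoly (y₁ y₂ : ℝ) : ℝ[X] :=
  C (y₁^2) * (X^2 + 4*X + 1)^3 + C (y₂^2) * (X^2 - 2*X - 2)^3
    + 2*X^6 + 6*X^5 - 15*X^4 - 40*X^3 - 15*X^2 + 6*X + 2

theorem EFun_eq_eval_EPoly (y₁ y₂ : ℝ) : EFun y₁ y₂ = fun t => (EPoly y₁ y₂).eval t := by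
  funext t
  simp [EFun, EPoly]

theorem deriv_EFun (y₁ y₂ t : ℝ) :
    deriv (EFun y₁ y₂) t
      = 6 * y₁^2 * (t^2 + 4*t + 1)^2 * (t + 2) + 6 * y₂^2 * (t^2 - 2*t - 2)^2 * (t - 1)
        + 12*t^5 + 30*t^4 - 60*t^3 - 120*t^2 - 30*t + 6 := by
  rw [EFun_eq_eval_EPoly, Polynomial.deriv]
  simp only [EPoly, map_pow, derivative_add, derivative_sub, derivative_mul, derivative_pow,
    Nat.cast_ofNat, Nat.add_one_sub_one, pow_one, derivative_C, mul_zero, zero_mul, derivative_X,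
    mul_one, derivative_ofNat, zero_add, derivative_one, add_zero, sub_zero, eval_add, eval_sub,
    eval_mul, eval_pow, eval_C, eval_X, eval_ofNat, eval_one]
  ring

theorem DFun_eq_mul_EFun_add_mul_deriv (y₁ y₂ t : ℝ) :
    DFun y₁ y₂ t
      = ((-2*t - 1) / 3) * EFun y₁ y₂ t + ((t^2 + t + 1) / 9) * deriv (EFun y₁ y₂) t := by
  rw [deriv_EFun]
  simp only [DFun, EFun]
  ring

/-- `D = ((−2t−1)/3)·E + ((t²+t+1)/9)·E′`, so `E = D = 0` iff
`E = E′ = 0`. -/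
theorem stmt_10 (y₁ y₂ : ℝ) :
    (∀ t : ℝ, DFun y₁ y₂ t
      = ((-2*t - 1) / 3) * EFun y₁ y₂ t
        + ((t^2 + t + 1) / 9) * deriv (EFun y₁ y₂) t) ∧
    (∀ t : ℝ, (EFun y₁ y₂ t = 0 ∧ DFun y₁ y₂ t = 0)
      ↔ (EFun y₁ y₂ t = 0 ∧ deriv (EFun y₁ y₂) t = 0)) := by
  refine ⟨DFun_eq_mul_EFun_add_mul_deriv y₁ y₂, fun t => ?_⟩
  have hcoeff : (t^2 + t + 1) / 9 ≠ 0 := by nlinarith [sq_nonneg (2 * t + 1)]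
  exact and_eq_zero_iff_of_eq_mul_add_mul hcoeff (DFun_eq_mul_EFun_add_mul_deriv y₁ y₂ t)
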